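/- arXiv:2005.07053 — 2 statements merged into one kernel-verified Lean document; each statement's English description precedes it below -/
import Mathlib

section
/- Let C* be a proper convex cone in R^m and let ξ_0 be a nonzero point on the boundary of the dual cone C. Then the set P_{ξ_0} = C* ∩ {p : ⟨ξ_0,p⟩ = 1} is unbounded. Consequently V(ξ) → ∞ as ξ tends to ξ_0 from the interior of C. -/
open MeasureTheory Real Set Filter
open scoped ENNReal Pointwise Topology

noncomputable section

abbrev E (m : ℕ) : Type := EuclideanSpace ℝ (Fin m)

def IsProperCone {m : ℕ} (S : Set (E m)) : Prop :=
  IsClosed S ∧ Convex ℝ S ∧ (∀ c : ℝ, 0 ≤ c → ∀ p ∈ S, c • p ∈ S) ∧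
    (interior S).Nonempty ∧ ∀ p ∈ S, -p ∈ S → p = 0

def dualCone {m : ℕ} (S : Set (E m)) : Set (E m) :=
  {x | ∀ p ∈ S, 0 ≤ (inner ℝ x p : ℝ)}

def hess {n : ℕ} (f : E n → ℝ) (x : E n) : Matrix (Fin n) (Fin n) ℝ :=
  Matrix.of fun i j =>
    iteratedFDeriv ℝ 2 f x ![EuclideanSpace.single i 1, EuclideanSpace.single j 1]

/-!
If ⟨ξ₀, ·⟩ were positive on C* \ {0}, compactness of C* ∩ S^{m-1} would give ⟨ξ₀, p⟩ ≥ ε‖p‖ on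
C*, and the whole ball of radius ε around ξ₀ would lie in the dual cone. So a boundary point ξ₀
annihilates some p ≠ 0 of C*, and translating by the ray ℝ≥0 p preserves C* and the level sets
of ⟨ξ₀, ·⟩. Hence P_{ξ₀} contains a half-line, and C* ∩ {⟨ξ₀, ·⟩ ≤ 1/2} contains infinitely many
disjoint translates of a ball, so it has infinite volume; for ξ close enough to ξ₀, the body
C* ∩ {⟨ξ, ·⟩ ≤ 1} contains any prescribed bounded part of it.
-/

open Metric Function
open scoped RealInnerProductSpace

section Ray

variable {V : Type*} [NormedAddCommGroup V] [NormedSpace ℝ V]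

theorem not_isBounded_of_add_smul_mem {T : Set V} {x v : V} (hv : v ≠ 0)
    (h : ∀ t : ℝ, 0 ≤ t → x + t • v ∈ T) : ¬ Bornology.IsBounded T := by
  intro hT
  obtain ⟨R, hR⟩ := isBounded_iff_forall_norm_le.1 hT
  have hvpos : 0 < ‖v‖ := norm_pos_iff.2 hv
  set t := (|R| + ‖x‖ + 1) / ‖v‖
  have ht : ‖t • v‖ = |R| + ‖x‖ + 1 := by
    rw [norm_smul, Real.norm_of_nonneg (by positivity), div_mul_cancel₀ _ hvpos.ne']
  have := norm_sub_le (x + t • v) x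
  rw [add_sub_cancel_left, ht] at this
  linarith [hR _ (h t (by positivity)), le_abs_self R]

theorem measure_eq_top_of_add_smul_mem [MeasurableSpace V] [BorelSpace V] (μ : Measure V)
    [μ.IsAddLeftInvariant] [μ.IsOpenPosMeasure] {U T : Set V} {v : V}
    (hU : IsOpen U) (hUne : U.Nonempty) (hv : v ≠ 0)
    (h : ∀ t : ℝ, 0 ≤ t → ∀ x ∈ U, x + t • v ∈ T) : μ T = ∞ := by
  obtain ⟨z, hz⟩ := hUne
  obtain ⟨r, hr, hzU⟩ := isOpen_iff.1 hU z hz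
  have hvpos : 0 < ‖v‖ := norm_pos_iff.2 hv
  set s := 2 * r / ‖v‖
  set shift : ℕ → V := fun k => (k * s) • v
  have hball_sub : ∀ k, ball (z + shift k) r ⊆ T := by
    intro k y hy
    have hy' : y - shift k ∈ U := hzU (by
      rwa [mem_ball, dist_eq_norm, sub_sub, add_comm, ← dist_eq_norm, ← mem_ball])
    simpa [shift] using h (k * s) (by positivity) _ hy'
  have hdisj : Pairwise (Disjoint on fun k => ball (z + shift k) r) := by
    refine (pairwise_disjoint_on _).2 fun k l hkl => ball_disjoint_ball ?_
    have hkl' : (1 : ℝ) ≤ l - k := by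
      rw [le_sub_iff_add_le']; exact_mod_cast hkl
    rw [dist_add_left, dist_eq_norm, ← sub_smul, norm_smul, ← sub_mul, Real.norm_eq_abs,
      abs_mul, abs_sub_comm, abs_of_pos (by linarith), abs_of_pos (by positivity),
      mul_assoc, div_mul_cancel₀ _ hvpos.ne']
    nlinarith
  have hmeas : ∀ k, μ (ball (z + shift k) r) = μ (ball z r) := fun k => by
    rw [← measure_preimage_add μ (shift k), preimage_add_ball, add_sub_cancel_right]
  refine eq_top_mono (measure_mono (iUnion_subset hball_sub)) ?_
  rw [measure_iUnion hdisj fun _ => measurableSet_ball, funext hmeas]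
  exact ENNReal.tsum_const_eq_top_of_ne_zero (measure_ball_pos μ z hr).ne'

end Ray

theorem add_mem_of_convex_of_smul_mem {V : Type*} [AddCommGroup V] [Module ℝ V] {S : Set V}
    (hconv : Convex ℝ S) (hsmul : ∀ c : ℝ, 0 ≤ c → ∀ p ∈ S, c • p ∈ S)
    {x y : V} (hx : x ∈ S) (hy : y ∈ S) : x + y ∈ S := by
  have := hsmul 2 zero_le_two _ (hconv hx hy (by norm_num) (by norm_num) (add_halves 1))
  rwa [smul_add, smul_smul, smul_smul, mul_one_div_cancel two_ne_zero, one_smul, one_smul]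
    at this

section InnerProductSpace

variable {V : Type*} [NormedAddCommGroup V] [InnerProductSpace ℝ V]

theorem tendsto_measure_inter_inner_le_one [MeasurableSpace V] (μ : Measure V) {S : Set V}
    {ξ₀ : V} {a : ℝ} (ha : a < 1) (hT : μ (S ∩ {x | ⟪ξ₀, x⟫ ≤ a}) = ∞) :
    Tendsto (fun ξ => μ (S ∩ {x | ⟪ξ, x⟫ ≤ 1})) (𝓝 ξ₀) (𝓝 ∞) := by
  set T := S ∩ {x | ⟪ξ₀, x⟫ ≤ a}
  rw [ENNReal.tendsto_nhds_top_iff_nat]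
  intro n
  have hlim : Tendsto (fun R : ℕ => μ (T ∩ closedBall 0 R)) atTop (𝓝 (μ T)) := by
    conv_rhs => rw [← iUnion_inter_closedBall_nat T 0]
    exact tendsto_measure_iUnion_atTop fun R R' hR =>
      inter_subset_inter_right T (closedBall_subset_closedBall (by exact_mod_cast hR))
  obtain ⟨R, hR⟩ := (hlim.eventually (lt_mem_nhds (hT ▸ ENNReal.natCast_lt_top n))).exists
  obtain ⟨δ, hδ, hδR⟩ := exists_pos_mul_lt (sub_pos.2 ha) (R : ℝ)
  filter_upwards [ball_mem_nhds ξ₀ hδ] with ξ hξ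
  refine hR.trans_le (measure_mono ?_)
  rintro x ⟨⟨hxS, hxa⟩, hxR⟩
  refine ⟨hxS, ?_⟩
  rw [mem_ball, dist_eq_norm] at hξ
  rw [mem_closedBall, dist_zero_right] at hxR
  calc ⟪ξ, x⟫ = ⟪ξ₀, x⟫ + ⟪ξ - ξ₀, x⟫ := by rw [inner_sub_left]; ring
    _ ≤ a + ‖ξ - ξ₀‖ * ‖x‖ := add_le_add hxa (real_inner_le_norm _ _)
    _ ≤ a + δ * R := by gcongr
    _ ≤ 1 := by linarith

theorem nonempty_interior_inter_inner_lt {S : Set V}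
    (hsmul : ∀ c : ℝ, 0 ≤ c → ∀ p ∈ S, c • p ∈ S) (hint : (interior S).Nonempty) (ξ : V)
    {ε : ℝ} (hε : 0 < ε) :
    (interior S ∩ {x | ⟪ξ, x⟫ < ε}).Nonempty := by
  obtain ⟨z, hz⟩ := hint
  obtain ⟨c, hc, hcz⟩ := exists_pos_mul_lt hε ⟪ξ, z⟫
  have hcS : c • S ⊆ S := by
    rintro _ ⟨p, hp, rfl⟩; exact hsmul c hc.le p hp
  refine ⟨c • z, interior_mono hcS ((interior_smul₀ hc.ne' S).symm ▸ smul_mem_smul_set hz), ?_⟩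
  show ⟪ξ, c • z⟫ < ε
  rwa [real_inner_smul_right, mul_comm]

end InnerProductSpace

section Cone

variable {m : ℕ} {S : Set (E m)}

theorem isClosed_dualCone (S : Set (E m)) : IsClosed (dualCone S) := by
  have h : dualCone S = ⋂ p ∈ S, {x : E m | 0 ≤ ⟪x, p⟫} := by
    ext x; simp [dualCone]
  rw [h]
  exact isClosed_biInter fun p _ =>
    isClosed_le continuous_const (continuous_id.inner continuous_const)

theorem mem_interior_dualCone_of_inner_pos (hS : IsClosed S)
    (hsmul : ∀ c : ℝ, 0 ≤ c → ∀ p ∈ S, c • p ∈ S) {ξ : E m}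
    (hpos : ∀ p ∈ S, p ≠ 0 → 0 < ⟪ξ, p⟫) : ξ ∈ interior (dualCone S) := by
  have hK : IsCompact (S ∩ sphere 0 1) := (isCompact_sphere 0 1).inter_left hS
  obtain ⟨ε, hε, hεK⟩ := hK.exists_forall_le' (f := fun x => ⟪ξ, x⟫) (by fun_prop)
    fun u hu => hpos u hu.1 (ne_zero_of_mem_unit_sphere ⟨u, hu.2⟩)
  have hcoercive : ∀ q ∈ S, ε * ‖q‖ ≤ ⟪ξ, q⟫ := by
    intro q hq
    rcases eq_or_ne q 0 with rfl | hq0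
    · simp
    have hu := hεK (‖q‖⁻¹ • q) ⟨hsmul _ (by positivity) q hq, by simp [norm_smul, hq0]⟩
    rw [real_inner_smul_right] at hu
    rwa [← le_inv_mul_iff₀' (norm_pos_iff.2 hq0)]
  refine mem_interior.2 ⟨ball ξ ε, fun ξ' hξ' q hq => ?_, isOpen_ball, mem_ball_self hε⟩
  rw [mem_ball, dist_eq_norm] at hξ'
  calc 0 ≤ (ε - ‖ξ' - ξ‖) * ‖q‖ := by nlinarith [norm_nonneg q]
    _ ≤ ⟪ξ, q⟫ + ⟪ξ' - ξ, q⟫ := by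
      nlinarith [hcoercive q hq, neg_le_of_abs_le (abs_real_inner_le_norm (ξ' - ξ) q)]
    _ = ⟪ξ', q⟫ := by rw [inner_sub_left]; ring

theorem exists_ne_zero_inner_eq_zero_of_mem_frontier (hS : IsClosed S)
    (hsmul : ∀ c : ℝ, 0 ≤ c → ∀ p ∈ S, c • p ∈ S) {ξ : E m} (hξ : ξ ∈ frontier (dualCone S)) :
    ∃ p ∈ S, p ≠ 0 ∧ ⟪ξ, p⟫ = 0 := by
  have hξS : ξ ∈ dualCone S := (isClosed_dualCone S).frontier_subset hξ
  by_contra! h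
  exact hξ.2 (mem_interior_dualCone_of_inner_pos hS hsmul fun p hp hp0 =>
    (hξS p hp).lt_of_ne (h p hp hp0).symm)

theorem exists_mem_inner_eq_one (hsmul : ∀ c : ℝ, 0 ≤ c → ∀ p ∈ S, c • p ∈ S)
    (hint : (interior S).Nonempty) {ξ : E m} (hξ : ξ ∈ dualCone S) (hne : ξ ≠ 0) :
    ∃ q ∈ S, ⟪ξ, q⟫ = 1 := by
  obtain ⟨z, hz⟩ := hint
  have hlim : Tendsto (fun t : ℝ => z + t • ξ) (𝓝[>] 0) (𝓝 z) := by
    refine (Continuous.tendsto' ?_ 0 z (by simp)).mono_left nhdsWithin_le_nhds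
    fun_prop
  obtain ⟨t, ht, hzt⟩ := (eventually_mem_nhdsWithin.and
    (hlim.eventually (mem_interior_iff_mem_nhds.1 hz))).exists
  have hpos : 0 < ⟪ξ, z + t • ξ⟫ := by
    rw [inner_add_right, real_inner_smul_right, real_inner_self_eq_norm_sq]
    have : 0 < t * ‖ξ‖ ^ 2 := mul_pos ht (by positivity)
    linarith [hξ z (interior_subset hz)]
  exact ⟨_, hsmul _ (inv_nonneg.2 hpos.le) _ hzt,
    by rw [real_inner_smul_right, inv_mul_cancel₀ hpos.ne']⟩

end Cone

theorem stmt1 (m : ℕ) (Cstar : Set (E m)) (hC : IsProperCone Cstar)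
    (ξ₀ : E m) (hξ₀ : ξ₀ ∈ frontier (dualCone Cstar)) (hne : ξ₀ ≠ 0) :
    ¬ Bornology.IsBounded (Cstar ∩ {p | (inner ℝ ξ₀ p : ℝ) = 1}) ∧
    Filter.Tendsto (fun ξ : E m => volume (Cstar ∩ {p | (inner ℝ ξ p : ℝ) ≤ 1}))
      (nhdsWithin ξ₀ (interior (dualCone Cstar))) (nhds (⊤ : ℝ≥0∞)) := by
  obtain ⟨hclosed, hconv, hsmul, hint, -⟩ := hC
  obtain ⟨p, hpC, hp0, hξ₀p⟩ := exists_ne_zero_inner_eq_zero_of_mem_frontier hclosed hsmul hξ₀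
  have hray : ∀ t : ℝ, 0 ≤ t → ∀ x ∈ Cstar, x + t • p ∈ Cstar ∧ ⟪ξ₀, x + t • p⟫ = ⟪ξ₀, x⟫ :=
    fun t ht x hx => ⟨add_mem_of_convex_of_smul_mem hconv hsmul hx (hsmul t ht p hpC),
      by rw [inner_add_right, real_inner_smul_right, hξ₀p, mul_zero, add_zero]⟩
  constructor
  · obtain ⟨q, hqC, hq1⟩ := exists_mem_inner_eq_one hsmul hint
      ((isClosed_dualCone Cstar).frontier_subset hξ₀) hne
    exact not_isBounded_of_add_smul_mem hp0 fun t ht =>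
      ⟨(hray t ht q hqC).1, ((hray t ht q hqC).2.trans hq1 :)⟩
  · refine (tendsto_measure_inter_inner_le_one volume one_half_lt_one ?_).mono_left
      nhdsWithin_le_nhds
    refine measure_eq_top_of_add_smul_mem volume
      (isOpen_interior.inter (isOpen_lt (by fun_prop) continuous_const))
      (nonempty_interior_inter_inner_lt hsmul hint ξ₀ one_half_pos) hp0 ?_
    rintro t ht x ⟨hx, hxξ₀⟩
    obtain ⟨hxp, hxpξ₀⟩ := hray t ht x (interior_subset hx)
    exact ⟨hxp, (hxpξ₀.trans_lt hxξ₀).le⟩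
end
end

section
/- Let C* be a proper convex cone in R^m, ξ ∈ int C a Reeb vector, l ∈ int C* with ⟨l,ξ⟩ = m. Write Φ(x) = φ(s) + t in linear coordinates (s,t) ∈ R^{m−1} × R where t = ⟨l,x⟩/m and s consists of ξ-invariant linear coordinates. Then the smooth convex function e^Φ on R^m satisfies det ∇²(e^Φ) = C e^{⟨l,x⟩} (for some constant C > 0) if and only if φ, viewed as a smooth convex function on R^{m−1}, satisfies det ∇²_s φ = c e^{−mφ} for some constant c > 0. -/
open MeasureTheory Real Set Filter
open scoped ENNReal Pointwise Topology

noncomputable section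

open scoped Matrix

lemma aux_rep_single {n : ℕ} (v : E n) : v = ∑ i, v i • EuclideanSpace.single i (1:ℝ) := by
  have h := (EuclideanSpace.basisFun (Fin n) ℝ).sum_repr v
  simp only [EuclideanSpace.basisFun_apply, EuclideanSpace.basisFun_repr] at h
  exact h.symm

lemma aux_lin1 {n : ℕ} (B : E n →L[ℝ] ℝ) (a : E n) :
    B a = ∑ i, a i * B (EuclideanSpace.single i (1:ℝ)) := by
  conv_lhs => rw [aux_rep_single a]
  rw [map_sum]
  simp

lemma aux_bil {n : ℕ} (B : E n →L[ℝ] E n →L[ℝ] ℝ) (a b : E n) :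
    B a b = ∑ k, ∑ r, a k * b r *
      B (EuclideanSpace.single k (1:ℝ)) (EuclideanSpace.single r (1:ℝ)) := by
  calc B a b = ∑ r, b r * (B a) (EuclideanSpace.single r 1) := aux_lin1 _ _
    _ = ∑ r, b r * ∑ k, a k * B (EuclideanSpace.single k 1) (EuclideanSpace.single r 1) := by
        refine Finset.sum_congr rfl fun r _ => ?_
        congr 1
        simpa using aux_lin1 (B.flip (EuclideanSpace.single r 1)) a
    _ = _ := by
        rw [Finset.sum_comm]
        refine Finset.sum_congr rfl fun k _ => ?_
        rw [Finset.mul_sum]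
        exact Finset.sum_congr rfl fun r _ => by ring

lemma aux_keyAlg {n m : ℕ} (P : Matrix (Fin n) (Fin m) ℝ) (H : Matrix (Fin n) (Fin n) ℝ)
    (w : Fin n → ℝ) (u : Fin m → ℝ) (Q : Matrix (Fin n ⊕ Unit) (Fin m) ℝ)
    (hQl : ∀ k t, Q (Sum.inl k) t = P k t) (hQr : ∀ z t, Q (Sum.inr z) t = u t)
    (i j : Fin m) :
    (Qᵀ * Matrix.fromBlocks (H + Matrix.vecMulVec w w) (Matrix.replicateCol Unit w)
        (Matrix.replicateRow Unit w) 1 * Q) i j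
      = (∑ k, ∑ r, P k i * P r j * H k r)
        + ((∑ k, P k i * w k) + u i) * ((∑ r, P r j * w r) + u j) := by
  simp only [Matrix.mul_apply, Matrix.transpose_apply,
    Fintype.sum_sum_type, Finset.univ_unique, Finset.sum_singleton,
    Matrix.fromBlocks_apply₁₁, Matrix.fromBlocks_apply₁₂, Matrix.fromBlocks_apply₂₁,
    Matrix.fromBlocks_apply₂₂, hQl, hQr, Matrix.add_apply,
    Matrix.vecMulVec_apply, Matrix.replicateCol_apply, Matrix.replicateRow_apply, Matrix.one_apply_eq,
    Finset.sum_mul, Finset.mul_sum, Finset.sum_add_distrib, add_mul, mul_add]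
  ring_nf
  have e1 : ∑ x : Fin n, ∑ x_1 : Fin n, P x_1 i * H x_1 x * P x j
      = ∑ k, ∑ r, P k i * P r j * H k r := by
    rw [Finset.sum_comm]
    exact Finset.sum_congr rfl fun k _ => Finset.sum_congr rfl fun r _ => by ring
  have e2 : ∑ x : Fin n, ∑ x_1 : Fin n, P x_1 i * w x_1 * w x * P x j
      = ∑ x : Fin n, ∑ x_1 : Fin n, P x_1 i * w x_1 * P x j * w x :=
    Finset.sum_congr rfl fun k _ => Finset.sum_congr rfl fun r _ => by ring
  have e3 : ∑ x : Fin n, u i * w x * P x j = ∑ x : Fin n, u i * P x j * w x :=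
    Finset.sum_congr rfl fun k _ => by ring
  have e4 : ∑ x : Fin n, ∑ x_1 : Fin n, P x_1 i * w x_1 * P x j * w x
      = ∑ x : Fin n, ∑ x_1 : Fin n, P x j * w x * P x_1 i * w x_1 :=
    Finset.sum_congr rfl fun k _ => Finset.sum_congr rfl fun r _ => by ring
  rw [e1, e2, e3, e4]
  ring

lemma aux_keyDet {n m : ℕ} (e : (Fin n ⊕ Unit) ≃ Fin m) (Q : Matrix (Fin n ⊕ Unit) (Fin m) ℝ)
    (H : Matrix (Fin n) (Fin n) ℝ) (w : Fin n → ℝ) :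
    (Qᵀ * Matrix.fromBlocks (H + Matrix.vecMulVec w w) (Matrix.replicateCol Unit w)
        (Matrix.replicateRow Unit w) 1 * Q).det
      = (Q.submatrix e.symm id).det ^ 2 * H.det := by
  set N := Matrix.fromBlocks (H + Matrix.vecMulVec w w) (Matrix.replicateCol Unit w)
    (Matrix.replicateRow Unit w) (1 : Matrix Unit Unit ℝ) with hN
  have h1 : (Q.submatrix e.symm id)ᵀ * (N.submatrix e.symm e.symm) * (Q.submatrix e.symm id)
      = Qᵀ * N * Q := by
    rw [Matrix.transpose_submatrix, Matrix.submatrix_mul_equiv, Matrix.submatrix_mul_equiv,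
      Matrix.submatrix_id_id]
  rw [← h1, Matrix.det_mul, Matrix.det_mul, Matrix.det_transpose,
    Matrix.det_submatrix_equiv_self]
  have h2 : N.det = H.det := by
    rw [hN, Matrix.det_fromBlocks_one₂₂, ← Matrix.vecMulVec_eq, add_sub_cancel_right]
  rw [h2]; ring

set_option maxHeartbeats 1000000 in
theorem stmt18 (m : ℕ) (hm : 1 ≤ m)
    (Cstar : Set (E m)) (hC : IsProperCone Cstar)
    (ξ : E m) (hξ : ξ ∈ interior (dualCone Cstar))
    (l : E m) (hl : l ∈ interior Cstar) (hnorm : (inner ℝ l ξ : ℝ) = m)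
    (s : E m →ₗ[ℝ] E (m - 1)) (hsξ : s ξ = 0)
    (coord : E m ≃ₗ[ℝ] E (m - 1) × ℝ)
    (hcoord : ∀ x, coord x = (s x, (inner ℝ l x : ℝ) / m))
    (φ : E (m - 1) → ℝ) (hφ : ContDiff ℝ (⊤ : ℕ∞) φ) (hφconv : ConvexOn ℝ Set.univ φ) :
    let Φ : E m → ℝ := fun x => φ (s x) + (inner ℝ l x : ℝ) / m
    ((∃ C > 0, ∀ x,
        (hess (fun x => Real.exp (Φ x)) x).det = C * Real.exp (inner ℝ l x : ℝ)) ↔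
      (∃ c > 0, ∀ y, (hess φ y).det = c * Real.exp (-(m : ℝ) * φ y))) := by
  intro Φ
  have hm0 : (m : ℝ) ≠ 0 := Nat.cast_ne_zero.mpr (by omega)
  set sL : E m →L[ℝ] E (m-1) := LinearMap.toContinuousLinearMap s with hsLdef
  have hd1 : Differentiable ℝ φ := hφ.differentiable (by simp)
  have hd2 : Differentiable ℝ (fderiv ℝ φ) := (hφ.fderiv_right (m := 1) (WithTop.coe_le_coe.mpr le_top)).differentiable one_ne_zero
  set D2 := fderiv ℝ (fderiv ℝ φ) with hD2def
  set G : E m → (E m →L[ℝ] ℝ) :=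
    fun x => ((fderiv ℝ φ (sL x)).comp sL) + (m:ℝ)⁻¹ • innerSL ℝ l with hGdef
  have hΦ' : ∀ x, HasFDerivAt Φ (G x) x := by
    intro x
    have h1 : HasFDerivAt (fun x => φ (sL x)) ((fderiv ℝ φ (sL x)).comp sL) x :=
      ((hd1 (sL x)).hasFDerivAt).comp x sL.hasFDerivAt
    have h2 : HasFDerivAt (fun x : E m => (inner ℝ l x : ℝ) / m) ((m:ℝ)⁻¹ • innerSL ℝ l) x := by
      simpa [div_eq_inv_mul] using ((innerSL ℝ l).hasFDerivAt (x := x)).const_mul ((m:ℝ)⁻¹)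
    exact h1.add h2
  set F : E m → (E m →L[ℝ] ℝ) := fun x => Real.exp (Φ x) • G x with hFdef
  have hu' : ∀ x, HasFDerivAt (fun x => Real.exp (Φ x)) (F x) x := fun x => (hΦ' x).exp
  have hfu : fderiv ℝ (fun x => Real.exp (Φ x)) = F := funext fun x => (hu' x).fderiv
  set K : (E (m-1) →L[ℝ] ℝ) →L[ℝ] (E m →L[ℝ] ℝ) :=
    (ContinuousLinearMap.compL ℝ (E m) (E (m-1)) ℝ).flip sL with hKdef
  have hG' : ∀ x, HasFDerivAt G ((K.comp ((D2 (sL x)).comp sL))) x := by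
    intro x
    have h3 : HasFDerivAt (fun x => fderiv ℝ φ (sL x)) ((D2 (sL x)).comp sL) x :=
      ((hd2 (sL x)).hasFDerivAt).comp x sL.hasFDerivAt
    exact ((K.hasFDerivAt).comp x h3).add_const _
  have hF' : ∀ x, HasFDerivAt F
      (Real.exp (Φ x) • (K.comp ((D2 (sL x)).comp sL)) + (F x).smulRight (G x)) x :=
    fun x => (hΦ' x).exp.smul (hG' x)
  have hessEq : ∀ x (i j : Fin m),
      hess (fun x => Real.exp (Φ x)) x i j
        = Real.exp (Φ x) *
            ((D2 (sL x)) (sL (EuclideanSpace.single i 1)) (sL (EuclideanSpace.single j 1))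
            + (G x (EuclideanSpace.single i 1)) * (G x (EuclideanSpace.single j 1))) := by
    intro x i j
    show iteratedFDeriv ℝ 2 (fun x => Real.exp (Φ x)) x ![_, _] = _
    rw [iteratedFDeriv_two_apply, hfu, (hF' x).fderiv]
    simp [ContinuousLinearMap.smulRight_apply, hFdef, hKdef,
      ContinuousLinearMap.flip_apply, ContinuousLinearMap.compL_apply]
    ring
  -- matrices
  set P : Matrix (Fin (m-1)) (Fin m) ℝ :=
    Matrix.of fun k t => sL (EuclideanSpace.single t 1) k with hPdef
  set Q : Matrix (Fin (m-1) ⊕ Unit) (Fin m) ℝ :=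
    Matrix.of fun a t => Sum.elim (fun k => P k t) (fun _ => l t / m) a with hQdef
  have hQl : ∀ k t, Q (Sum.inl k) t = P k t := fun _ _ => rfl
  have hQr : ∀ (z : Unit) t, Q (Sum.inr z) t = l t / m := fun _ _ => rfl
  have e : (Fin (m-1) ⊕ Unit) ≃ Fin m :=
    (Equiv.sumCongr (Equiv.refl _) (Equiv.ofUnique Unit (Fin 1))).trans
      (finSumFinEquiv.trans (finCongr (by omega)))
  set A : Matrix (Fin m) (Fin m) ℝ := Q.submatrix e.symm id with hAdef
  -- per-point objects
  set w : E m → (Fin (m-1) → ℝ) :=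
    fun x k => fderiv ℝ φ (sL x) (EuclideanSpace.single k 1) with hwdef
  have hH : ∀ x (k r : Fin (m-1)),
      hess φ (sL x) k r = (D2 (sL x)) (EuclideanSpace.single k 1) (EuclideanSpace.single r 1) := by
    intro x k r
    show iteratedFDeriv ℝ 2 φ (sL x) ![_, _] = _
    rw [iteratedFDeriv_two_apply]
    rfl
  have hMx : ∀ x, hess (fun x => Real.exp (Φ x)) x
      = Real.exp (Φ x) • (Qᵀ * Matrix.fromBlocks (hess φ (sL x) + Matrix.vecMulVec (w x) (w x))
          (Matrix.replicateCol Unit (w x)) (Matrix.replicateRow Unit (w x)) 1 * Q) := by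
    intro x
    ext i j
    rw [Matrix.smul_apply, aux_keyAlg P (hess φ (sL x)) (w x) (fun t => l t / m) Q hQl hQr i j,
      hessEq x i j]
    rw [aux_bil (D2 (sL x)) (sL (EuclideanSpace.single i 1)) (sL (EuclideanSpace.single j 1))]
    have hGapp : ∀ t : Fin m, G x (EuclideanSpace.single t 1)
        = (∑ k, P k t * w x k) + l t / m := by
      intro t
      have h1 : fderiv ℝ φ (sL x) (sL (EuclideanSpace.single t 1))
          = ∑ k, P k t * w x k := by
        rw [aux_lin1 (fderiv ℝ φ (sL x)) (sL (EuclideanSpace.single t 1))]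
        rfl
      have h2 : (inner ℝ l (EuclideanSpace.single t (1:ℝ)) : ℝ) = l t := by
        simp [EuclideanSpace.inner_single_right]
      simp only [hGdef, ContinuousLinearMap.add_apply, ContinuousLinearMap.comp_apply,
        ContinuousLinearMap.smul_apply, innerSL_apply_apply, h1, h2, smul_eq_mul]
      ring
    rw [hGapp i, hGapp j]
    have hsum : (∑ k, ∑ r, (sL (EuclideanSpace.single i 1)) k *
          (sL (EuclideanSpace.single j 1)) r *
          (D2 (sL x)) (EuclideanSpace.single k 1) (EuclideanSpace.single r 1))
        = ∑ k, ∑ r, P k i * P r j * hess φ (sL x) k r :=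
      Finset.sum_congr rfl fun k _ => Finset.sum_congr rfl fun r _ => by
        rw [hH x k r]; rfl
    rw [hsum]
    simp [smul_eq_mul]
  have hAdet : A.det ≠ 0 := by
    intro h0
    obtain ⟨v, hv0, hv⟩ := Matrix.exists_mulVec_eq_zero_iff.mpr h0
    set xv : E m := (WithLp.equiv 2 (Fin m → ℝ)).symm v with hxvdef
    have hxvt : ∀ t, xv t = v t := fun _ => rfl
    have hlin : ∀ (B : E m →L[ℝ] ℝ), B xv = ∑ t, v t * B (EuclideanSpace.single t 1) := by
      intro B
      simpa [hxvt] using aux_lin1 B xv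
    have hrow : ∀ a : Fin (m-1) ⊕ Unit, ∑ t, Q a t * v t = 0 := by
      intro a
      have h := congrFun hv (e a)
      simp only [Matrix.mulVec, dotProduct, hAdef, Matrix.submatrix_apply,
        Equiv.symm_apply_apply, id_eq, Pi.zero_apply] at h
      exact h
    have hs0 : s xv = 0 := by
      ext k
      show s xv k = (0:ℝ)
      have h := hrow (Sum.inl k)
      have hb : ((EuclideanSpace.proj k : E (m-1) →L[ℝ] ℝ).comp sL) xv
          = ∑ t, v t * P k t := by
        rw [hlin]
        rfl
      have hsk : s xv k = ∑ t, v t * P k t := hb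
      rw [hsk, ← h]
      exact Finset.sum_congr rfl fun t _ => by rw [hQl]; ring
    have ht0 : (inner ℝ l xv : ℝ) = 0 := by
      have h := hrow (Sum.inr ())
      have h2 : ∑ t, Q (Sum.inr ()) t * v t = (∑ t, l t * v t) / m := by
        rw [Finset.sum_div]
        refine Finset.sum_congr rfl fun t _ => ?_
        rw [hQr]
        ring
      rw [h2] at h
      have h3 : ∑ t, l t * v t = 0 := by
        rcases div_eq_zero_iff.mp h with h' | h'
        · exact h'
        · exact absurd h' hm0
      have h4 : (innerSL ℝ l) xv = ∑ t, v t * (inner ℝ l (EuclideanSpace.single t (1:ℝ)) : ℝ) := by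
        simpa using hlin (innerSL ℝ l)
      have h5 : (innerSL ℝ l) xv = 0 := by
        rw [h4, ← h3]
        refine Finset.sum_congr rfl fun t _ => ?_
        have : (inner ℝ l (EuclideanSpace.single t (1:ℝ)) : ℝ) = l t := by
          simp [EuclideanSpace.inner_single_right]
        rw [this]; ring
      simpa using h5
    have hxv0 : xv = 0 := by
      have hco : coord xv = 0 := by
        rw [hcoord xv, hs0, ht0]
        simp
      exact (LinearEquiv.map_eq_zero_iff coord).mp hco
    apply hv0
    funext t
    have := congrFun (congrArg (fun (z : E m) => (z : Fin m → ℝ)) hxv0) t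
    simpa [hxvt] using this
  have hKpos : 0 < A.det ^ 2 := pow_two_pos_of_ne_zero hAdet
  have hdet : ∀ x, (hess (fun x => Real.exp (Φ x)) x).det
      = A.det ^ 2 * (Real.exp (inner ℝ l x : ℝ) *
          (Real.exp ((m:ℝ) * φ (s x)) * (hess φ (s x)).det)) := by
    intro x
    rw [hMx x, Matrix.det_smul, aux_keyDet e Q (hess φ (sL x)) (w x)]
    rw [Fintype.card_fin]
    have hexp : Real.exp (Φ x) ^ m = Real.exp (inner ℝ l x : ℝ) * Real.exp ((m:ℝ) * φ (s x)) := by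
      rw [← Real.exp_nat_mul, ← Real.exp_add]
      congr 1
      show (m:ℝ) * (φ (s x) + (inner ℝ l x : ℝ) / m) = _
      field_simp
      ring
    rw [hexp, ← hAdef]
    have hsx : hess φ (sL x) = hess φ (s x) := rfl
    rw [hsx]
    ring
  constructor
  · rintro ⟨C, hCpos, hCx⟩
    refine ⟨C / A.det ^ 2, div_pos hCpos hKpos, fun y => ?_⟩
    set x : E m := coord.symm (y, 0) with hxdef
    have h := hcoord x
    rw [coord.apply_symm_apply] at h
    have hs : s x = y := (Prod.mk.injEq _ _ _ _ |>.mp h.symm).1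
    have hti : (inner ℝ l x : ℝ) / m = 0 := (Prod.mk.injEq _ _ _ _ |>.mp h.symm).2
    have ht : (inner ℝ l x : ℝ) = 0 := by
      rcases div_eq_zero_iff.mp hti with h' | h'
      · exact h'
      · exact absurd h' hm0
    have h2 := hCx x
    rw [hdet x, hs, ht, Real.exp_zero] at h2
    have hne : Real.exp ((m:ℝ) * φ y) ≠ 0 := Real.exp_ne_zero _
    rw [mul_one] at h2
    have h3 : (hess φ y).det = C / (A.det ^ 2 * Real.exp ((m:ℝ) * φ y)) := by
      rw [eq_div_iff (mul_ne_zero hKpos.ne' hne)]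
      linear_combination h2
    rw [h3, ← div_div, neg_mul, Real.exp_neg, div_eq_mul_inv (C / A.det ^ 2)]
  · rintro ⟨c, hcpos, hcy⟩
    refine ⟨A.det ^ 2 * c, mul_pos hKpos hcpos, fun x => ?_⟩
    rw [hdet x, hcy (s x)]
    have h1 : Real.exp ((m:ℝ) * φ (s x)) * Real.exp (-(m:ℝ) * φ (s x)) = 1 := by
      rw [← Real.exp_add]
      ring_nf
      exact Real.exp_zero
    calc A.det ^ 2 * (Real.exp (inner ℝ l x : ℝ) *
          (Real.exp ((m:ℝ) * φ (s x)) * (c * Real.exp (-(m:ℝ) * φ (s x)))))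
        = A.det ^ 2 * c * Real.exp (inner ℝ l x : ℝ) *
            (Real.exp ((m:ℝ) * φ (s x)) * Real.exp (-(m:ℝ) * φ (s x))) := by ring
      _ = A.det ^ 2 * c * Real.exp (inner ℝ l x : ℝ) := by rw [h1, mul_one]
end
end
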